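/- arXiv:2307.13151 — 3 statements merged into one kernel-verified Lean document; each statement's English description precedes it below -/
import Mathlib

section
/- Assume the uniform gap condition: there exists ν > 0 such that a_θ[w] ≥ ν ‖w‖_θ² for all w ∈ W_θ and all θ ∈ Θ. Let ε > 0, θ ∈ Θ, and let f be a bounded conjugate-linear functional on H. If u_{ε,θ} ∈ H satisfies ε⁻² a_θ(u_{ε,θ}, ũ) + b_θ(u_{ε,θ}, ũ) = ⟨f, ũ⟩ for all ũ ∈ H, and v_θ ∈ V_θ satisfies b_θ(v_θ, ṽ) = ⟨f, ṽ⟩ for all ṽ ∈ V_θ, then ε⁻² a_θ[u_{ε,θ} − v_θ] + b_θ[u_{ε,θ} − v_θ] ≤ ε² ν⁻¹ ‖f‖_{*θ}² and ‖u_{ε,θ} − v_θ‖_θ² ≤ ε⁴ ν⁻² ‖f‖_{*θ}². -/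
noncomputable section

open scoped Classical

/-- An abstract family of non-negative bounded sesquilinear forms `a θ`, `b θ`
(linear in the first argument, conjugate-linear in the second) on a complex Hilbert
space `H`, parametrised by `θ` in a compact subset `Θ` of `ℝⁿ`, such that
`(·,·)_θ := a θ + b θ` is a family of inner products whose norms are equivalent
to the norm of `H`. -/
structure FormFamily (n : ℕ) (H : Type*) [NormedAddCommGroup H] [InnerProductSpace ℂ H]
    [CompleteSpace H] where
  Θ : Set (EuclideanSpace ℝ (Fin n))
  compactΘ : IsCompact Θ
  a : EuclideanSpace ℝ (Fin n) → H → H → ℂ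
  b : EuclideanSpace ℝ (Fin n) → H → H → ℂ
  a_addL : ∀ θ ∈ Θ, ∀ u v w : H, a θ (u + v) w = a θ u w + a θ v w
  a_smulL : ∀ θ ∈ Θ, ∀ (c : ℂ) (u w : H), a θ (c • u) w = c * a θ u w
  a_addR : ∀ θ ∈ Θ, ∀ u v w : H, a θ u (v + w) = a θ u v + a θ u w
  a_smulR : ∀ θ ∈ Θ, ∀ (c : ℂ) (u w : H), a θ u (c • w) = starRingEnd ℂ c * a θ u w
  a_nonneg : ∀ θ ∈ Θ, ∀ u : H, 0 ≤ (a θ u u).re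
  a_im : ∀ θ ∈ Θ, ∀ u : H, (a θ u u).im = 0
  a_bdd : ∀ θ ∈ Θ, ∃ C : ℝ, ∀ u w : H, ‖a θ u w‖ ≤ C * ‖u‖ * ‖w‖
  b_addL : ∀ θ ∈ Θ, ∀ u v w : H, b θ (u + v) w = b θ u w + b θ v w
  b_smulL : ∀ θ ∈ Θ, ∀ (c : ℂ) (u w : H), b θ (c • u) w = c * b θ u w
  b_addR : ∀ θ ∈ Θ, ∀ u v w : H, b θ u (v + w) = b θ u v + b θ u w
  b_smulR : ∀ θ ∈ Θ, ∀ (c : ℂ) (u w : H), b θ u (c • w) = starRingEnd ℂ c * b θ u w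
  b_nonneg : ∀ θ ∈ Θ, ∀ u : H, 0 ≤ (b θ u u).re
  b_im : ∀ θ ∈ Θ, ∀ u : H, (b θ u u).im = 0
  b_bdd : ∀ θ ∈ Θ, ∃ C : ℝ, ∀ u w : H, ‖b θ u w‖ ≤ C * ‖u‖ * ‖w‖
  equivNorm : ∀ θ ∈ Θ, ∃ c₁ c₂ : ℝ, 0 < c₁ ∧ ∀ u : H,
    c₁ * ‖u‖ ^ 2 ≤ (a θ u u).re + (b θ u u).re ∧
      (a θ u u).re + (b θ u u).re ≤ c₂ * ‖u‖ ^ 2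

namespace FormFamily

variable {n : ℕ} {H : Type*} [NormedAddCommGroup H] [InnerProductSpace ℂ H] [CompleteSpace H]

/-- The inner product `(u, w)_θ := a θ u w + b θ u w`. -/
def ip (S : FormFamily n H) (θ : EuclideanSpace ℝ (Fin n)) (u w : H) : ℂ :=
  S.a θ u w + S.b θ u w

/-- The squared `θ`-norm `‖u‖_θ ^ 2 = (u, u)_θ`. -/
def nsq (S : FormFamily n H) (θ : EuclideanSpace ℝ (Fin n)) (u : H) : ℝ :=
  (S.ip θ u u).re

/-- The `θ`-norm `‖u‖_θ`. -/
def nrm (S : FormFamily n H) (θ : EuclideanSpace ℝ (Fin n)) (u : H) : ℝ :=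
  Real.sqrt (S.nsq θ u)

/-- The degeneracy subspace `V_θ = {v : a_θ[v] = 0}`. -/
def V (S : FormFamily n H) (θ : EuclideanSpace ℝ (Fin n)) : Set H :=
  {v : H | S.a θ v v = 0}

/-- `W_θ`, the orthogonal complement of `V_θ` in `H` with respect to `(·,·)_θ`. -/
def W (S : FormFamily n H) (θ : EuclideanSpace ℝ (Fin n)) : Set H :=
  {w : H | ∀ v ∈ S.V θ, S.ip θ w v = 0}

end FormFamily

/-- `f : H → ℂ` is a bounded conjugate-linear functional. -/
def IsBddConjLinear {H : Type*} [NormedAddCommGroup H] [InnerProductSpace ℂ H]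
    (f : H → ℂ) : Prop :=
  (∀ u v : H, f (u + v) = f u + f v) ∧
    (∀ (c : ℂ) (u : H), f (c • u) = starRingEnd ℂ c * f u) ∧
    ∃ C : ℝ, ∀ u : H, ‖f u‖ ≤ C * ‖u‖

/-- The homogenised form `a^h_θ(v,vt) = a''₀(v,vt)θ·θ - a₀(N_θ v, N_θ vt)`. -/
def ahom {n : ℕ} {H : Type*} [NormedAddCommGroup H] [InnerProductSpace ℂ H] [CompleteSpace H]
    (S : FormFamily n H) (a'' : H → H → Fin n → Fin n → ℂ)
    (N : EuclideanSpace ℝ (Fin n) → H → H) (θ : EuclideanSpace ℝ (Fin n)) (v vt : H) : ℂ :=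
  (∑ j, ∑ k, a'' v vt j k * (θ j : ℂ) * (θ k : ℂ)) - S.a 0 (N θ v) (N θ vt)

section AuxSesq

variable {H : Type*} [NormedAddCommGroup H] [InnerProductSpace ℂ H]

lemma sesq_negL (s : H → H → ℂ)
    (hsmulL : ∀ (c : ℂ) (u w : H), s (c • u) w = c * s u w) (u w : H) :
    s (-u) w = - s u w := by
  have := hsmulL (-1) u w
  simpa using this

lemma sesq_negR (s : H → H → ℂ)
    (hsmulR : ∀ (c : ℂ) (u w : H), s u (c • w) = starRingEnd ℂ c * s u w) (u w : H) :
    s u (-w) = - s u w := by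
  have := hsmulR (-1) u w
  simpa using this

lemma sesq_subL (s : H → H → ℂ)
    (haddL : ∀ u v w : H, s (u + v) w = s u w + s v w)
    (hsmulL : ∀ (c : ℂ) (u w : H), s (c • u) w = c * s u w) (u v w : H) :
    s (u - v) w = s u w - s v w := by
  rw [sub_eq_add_neg, haddL, sesq_negL s hsmulL, sub_eq_add_neg]

lemma sesq_herm (s : H → H → ℂ)
    (haddL : ∀ u v w : H, s (u + v) w = s u w + s v w)
    (hsmulL : ∀ (c : ℂ) (u w : H), s (c • u) w = c * s u w)
    (haddR : ∀ u v w : H, s u (v + w) = s u v + s u w)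
    (hsmulR : ∀ (c : ℂ) (u w : H), s u (c • w) = starRingEnd ℂ c * s u w)
    (him : ∀ u : H, (s u u).im = 0) (u w : H) :
    s w u = starRingEnd ℂ (s u w) := by
  have h1 : (s (u + w) (u + w)).im = 0 := him _
  have h2 : (s (u + Complex.I • w) (u + Complex.I • w)).im = 0 := him _
  simp only [haddL, haddR, hsmulL, hsmulR, Complex.conj_I, Complex.add_im,
    Complex.mul_im, Complex.mul_re, Complex.neg_re, Complex.neg_im,
    Complex.I_re, Complex.I_im, him u, him w] at h1 h2
  apply Complex.ext <;> simp only [Complex.conj_re, Complex.conj_im] <;>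
    nlinarith [h1, h2, him u, him w]

lemma sesq_cs_zero (s : H → H → ℂ)
    (haddL : ∀ u v w : H, s (u + v) w = s u w + s v w)
    (hsmulL : ∀ (c : ℂ) (u w : H), s (c • u) w = c * s u w)
    (haddR : ∀ u v w : H, s u (v + w) = s u v + s u w)
    (hsmulR : ∀ (c : ℂ) (u w : H), s u (c • w) = starRingEnd ℂ c * s u w)
    (hnonneg : ∀ u : H, 0 ≤ (s u u).re)
    (him : ∀ u : H, (s u u).im = 0)
    (u v : H) (hv : s v v = 0) : s u v = 0 := by
  by_contra hc
  have herm := sesq_herm s haddL hsmulL haddR hsmulR him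
  set c : ℂ := s u v with hcdef
  have hnsq : (0 : ℝ) < Complex.normSq c := Complex.normSq_pos.mpr hc
  set t : ℝ := -(((s u u).re + 1) / Complex.normSq c) with ht
  have hkey := hnonneg (u + ((t : ℂ) * c) • v)
  have hexp : s (u + ((t : ℂ) * c) • v) (u + ((t : ℂ) * c) • v)
      = s u u + (2 * t * Complex.normSq c : ℝ) := by
    simp only [haddL, haddR, hsmulL, hsmulR, herm u v, ← hcdef, hv, map_mul,
      Complex.conj_ofReal, mul_zero, add_zero]
    have hmc : c * starRingEnd ℂ c = (Complex.normSq c : ℂ) := Complex.mul_conj c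
    push_cast
    linear_combination (2 * (t : ℂ)) * hmc
  rw [hexp] at hkey
  simp only [Complex.add_re, Complex.ofReal_re] at hkey
  have htc : t * Complex.normSq c = -((s u u).re + 1) := by
    rw [ht]; field_simp
  nlinarith [hnonneg u, hkey, htc]

end AuxSesq

set_option maxHeartbeats 1600000 in
theorem statement0
    {n : ℕ} (hn : 0 < n) {H : Type*} [NormedAddCommGroup H] [InnerProductSpace ℂ H]
    [CompleteSpace H] (S : FormFamily n H)
    (ν : ℝ) (hν : 0 < ν)
    (hgap : ∀ θ ∈ S.Θ, ∀ w ∈ S.W θ, ν * S.nsq θ w ≤ (S.a θ w w).re)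
    (ε : ℝ) (hε : 0 < ε)
    (θ : EuclideanSpace ℝ (Fin n)) (hθ : θ ∈ S.Θ)
    (f : H → ℂ) (hf : IsBddConjLinear f)
    (u : H) (hu : ∀ w : H, ((ε : ℂ) ^ 2)⁻¹ * S.a θ u w + S.b θ u w = f w)
    (v : H) (hv : v ∈ S.V θ) (hveq : ∀ vt ∈ S.V θ, S.b θ v vt = f vt)
    (M : ℝ) (hM : ∀ w : H, ‖f w‖ ≤ M * S.nrm θ w) :
    (ε ^ 2)⁻¹ * (S.a θ (u - v) (u - v)).re + (S.b θ (u - v) (u - v)).re ≤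
        ε ^ 2 * ν⁻¹ * M ^ 2 ∧
      S.nsq θ (u - v) ≤ ε ^ 4 * (ν ^ 2)⁻¹ * M ^ 2 := by
  have aL := S.a_addL θ hθ
  have aSL := S.a_smulL θ hθ
  have aR := S.a_addR θ hθ
  have aSR := S.a_smulR θ hθ
  have bL := S.b_addL θ hθ
  have bSL := S.b_smulL θ hθ
  have bR := S.b_addR θ hθ
  have bSR := S.b_smulR θ hθ
  have aim := S.a_im θ hθ
  have bim := S.b_im θ hθ
  have ann := S.a_nonneg θ hθ
  have bnn := S.b_nonneg θ hθ
  set e : H := u - v with he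
  have bherm : ∀ x y : H, S.b θ y x = starRingEnd ℂ (S.b θ x y) :=
    sesq_herm _ bL bSL bR bSR bim
  have hvv : S.a θ v v = 0 := hv
  -- a(x, v') = 0 whenever v' ∈ V
  have haV : ∀ x v' : H, S.a θ v' v' = 0 → S.a θ x v' = 0 := fun x v' hv' =>
    sesq_cs_zero _ aL aSL aR aSR ann aim x v' hv'
  have aherm : ∀ x y : H, S.a θ y x = starRingEnd ℂ (S.a θ x y) :=
    sesq_herm _ aL aSL aR aSR aim
  -- subtraction expansions
  have asub : ∀ w : H, S.a θ e w = S.a θ u w - S.a θ v w := fun w =>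
    sesq_subL _ aL aSL u v w
  have bsub : ∀ w : H, S.b θ e w = S.b θ u w - S.b θ v w := fun w =>
    sesq_subL _ bL bSL u v w
  -- b(e, v') = 0 for v' ∈ V
  have hbeV : ∀ v' ∈ S.V θ, S.b θ e v' = 0 := by
    intro v' hv'
    have hv'0 : S.a θ v' v' = 0 := hv'
    have h1 := hu v'
    rw [haV u v' hv'0, mul_zero, zero_add] at h1
    rw [bsub, h1, hveq v' hv', sub_self]
  -- e ∈ W
  have heW : e ∈ S.W θ := by
    intro v' hv'
    have hv'0 : S.a θ v' v' = 0 := hv'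
    show S.a θ e v' + S.b θ e v' = 0
    rw [haV e v' hv'0, hbeV v' hv', add_zero]
  -- key identity : ε⁻² a(e,e) + b(e,e) = f e
  have hkey : ((ε : ℂ) ^ 2)⁻¹ * S.a θ e e + S.b θ e e = f e := by
    have h1 := hu e
    have hae : S.a θ u e = S.a θ e e := by
      have hv0 : S.a θ v e = 0 := by
        rw [aherm, haV e v hvv, map_zero]
      rw [asub, hv0, sub_zero] at *
    have hbe : S.b θ u e = S.b θ e e := by
      have hv0 : S.b θ v e = 0 := by
        rw [bherm, hbeV v hv, map_zero]
      rw [bsub, hv0, sub_zero] at *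
    rw [hae, hbe] at h1
    exact h1
  set A : ℝ := (S.a θ e e).re with hA
  set B : ℝ := (S.b θ e e).re with hB
  set X : ℝ := (ε ^ 2)⁻¹ * A + B with hX
  have hAnn : 0 ≤ A := ann e
  have hBnn : 0 ≤ B := bnn e
  have hε2 : (0 : ℝ) < ε ^ 2 := by positivity
  have hXnn : 0 ≤ X := by positivity
  have hN2 : S.nsq θ e = A + B := by
    simp [FormFamily.nsq, FormFamily.ip, Complex.add_re, hA, hB]
  have hN2nn : 0 ≤ S.nsq θ e := by rw [hN2]; positivity
  -- X = (f e).re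
  have hXf : X = (f e).re := by
    have : (((ε : ℂ) ^ 2)⁻¹ * S.a θ e e + S.b θ e e).re = (f e).re := by
      rw [hkey]
    have hcast : ((ε : ℂ) ^ 2)⁻¹ = (((ε ^ 2)⁻¹ : ℝ) : ℂ) := by push_cast; ring
    rw [Complex.add_re, hcast, Complex.re_ofReal_mul] at this
    simpa [hX, hA, hB] using this
  -- bound X ≤ M * nrm e
  have hnrm : S.nrm θ e = Real.sqrt (S.nsq θ e) := rfl
  have hnrmnn : 0 ≤ S.nrm θ e := Real.sqrt_nonneg _
  have hnrmsq : (S.nrm θ e) ^ 2 = A + B := by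
    rw [hnrm, Real.sq_sqrt hN2nn, hN2]
  have hXle : X ≤ M * S.nrm θ e := by
    rw [hXf]
    calc (f e).re ≤ ‖f e‖ := Complex.re_le_norm (f e)
      _ ≤ M * S.nrm θ e := hM e
  -- gap
  have hgapE : ν * S.nsq θ e ≤ A := hgap θ hθ e heW
  have hAX : A ≤ ε ^ 2 * X := by
    rw [hX]
    have : (ε ^ 2)⁻¹ * A ≤ (ε ^ 2)⁻¹ * A + B := by linarith
    calc A = ε ^ 2 * ((ε ^ 2)⁻¹ * A) := by field_simp
      _ ≤ ε ^ 2 * ((ε ^ 2)⁻¹ * A + B) := by nlinarith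
  have hNX : ν * (A + B) ≤ ε ^ 2 * X := by rw [← hN2]; linarith
  -- X² ≤ M² (A+B)
  have hXsq : X ^ 2 ≤ M ^ 2 * (A + B) := by
    nlinarith [hXle, hXnn, hnrmnn, hnrmsq]
  have hM2nn : (0 : ℝ) ≤ M ^ 2 := sq_nonneg M
  have hchain : ν * X ^ 2 ≤ ε ^ 2 * M ^ 2 * X := by
    nlinarith [hXsq, hNX, hM2nn]
  clear_value X A B e
  clear hu hveq hM hkey hXf hnrm aL aSL aR aSR bL bSL bR bSR aim bim ann bnn
  clear bherm aherm haV asub bsub hbeV heW hgap hf hv hvv hnrmsq hXle hnrmnn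
  rcases hXnn.eq_or_lt with h0 | hpos
  · constructor
    · rw [← h0]; positivity
    · have hX0 : X = 0 := h0.symm
      rw [hX0, mul_zero] at hNX
      have hAB0 : A + B = 0 := le_antisymm (by nlinarith) (by positivity)
      rw [hN2, hAB0]; positivity
  · have hXbound : X ≤ ε ^ 2 * ν⁻¹ * M ^ 2 := by
      have h0' : (ν * X) * X ≤ (ε ^ 2 * M ^ 2) * X := by nlinarith [hchain]
      have h1 : ν * X ≤ ε ^ 2 * M ^ 2 := le_of_mul_le_mul_right h0' hpos
      have h2 := mul_le_mul_of_nonneg_left h1 (inv_nonneg.mpr hν.le)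
      rw [← mul_assoc, inv_mul_cancel₀ hν.ne', one_mul] at h2
      calc X ≤ ν⁻¹ * (ε ^ 2 * M ^ 2) := h2
        _ = ε ^ 2 * ν⁻¹ * M ^ 2 := by ring
    refine ⟨hXbound, ?_⟩
    have h2' : ε ^ 2 * X ≤ ε ^ 2 * (ε ^ 2 * ν⁻¹ * M ^ 2) := by nlinarith [hXbound, hε2]
    have h2 : ν * (A + B) ≤ ε ^ 2 * (ε ^ 2 * ν⁻¹ * M ^ 2) := hNX.trans h2'
    have h3 := mul_le_mul_of_nonneg_left h2 (inv_nonneg.mpr hν.le)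
    rw [← mul_assoc, inv_mul_cancel₀ hν.ne', one_mul] at h3
    rw [hN2]
    calc A + B ≤ ν⁻¹ * (ε ^ 2 * (ε ^ 2 * ν⁻¹ * M ^ 2)) := h3
      _ = ε ^ 4 * (ν ^ 2)⁻¹ * M ^ 2 := by
          have hs : (ν ^ 2)⁻¹ = ν⁻¹ * ν⁻¹ := by rw [sq, mul_inv]
          rw [hs]; ring
end
end

section
/- Assume the gap condition (H1). Then the following are equivalent: (i) the gap is uniform, i.e. there exists ν > 0 such that a_θ[w] ≥ ν ‖w‖_θ² for all w ∈ W_θ and all θ ∈ Θ; (ii) the subspaces V_θ are Lipschitz continuous in θ, i.e. there exists L_V > 0 such that for all θ₁, θ₂ ∈ Θ and every v₁ ∈ V_{θ₁} one has inf over v₂ ∈ V_{θ₂} of ‖v₁ − v₂‖_{θ₂} ≤ L_V |θ₁ − θ₂| ‖v₁‖_{θ₁}. -/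
/-!
Let `P_θ` be the `(·,·)_θ`-orthogonal projection onto `V_θ`; it exists because `V_θ` is closed and
`‖·‖_θ` is equivalent to the norm of `H`. Null vectors of the non-negative form `a_θ` are
`a_θ`-orthogonal to everything (Cauchy–Schwarz).

(i) ⇒ (ii): for `v₁ ∈ V_{θ₁}` put `w = v₁ - P_{θ₂} v₁ ∈ W_{θ₂}`. Since `v₁` and `P_{θ₂} v₁` are null
for `a_{θ₁}` and `a_{θ₂}` respectively, `a_{θ₂}[w] = a_{θ₂}(v₁, w) - a_{θ₁}(v₁, w)`, so the uniform
gap and the Lipschitz bound on `a` give `ν ‖w‖_{θ₂}² ≤ L_a K |θ₁ - θ₂| ‖v₁‖_{θ₁} ‖w‖_{θ₂}`.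

(ii) ⇒ (i): for `w ∈ W_θ` split `w = v + u` with `v = P_{θ₀} w`. As `w ⊥ V_θ`, `‖w‖_θ` is the
distance from `w` to `V_θ`, which by (ii) applied to `v` is at most
`K ‖u‖_{θ₀} + L_V K |θ - θ₀| ‖w‖_θ`, while `a_{θ₀}[u] = a_{θ₀}[w]` differs from `a_θ[w]` by
`O(|θ - θ₀|) ‖w‖_θ²`. Hence the gap `ν_{θ₀}` at `θ₀` yields the gap `ν_{θ₀} / (8K²)` at every `θ`
close to `θ₀`, and compactness of `Θ` makes it uniform.
-/

noncomputable section

open scoped Classical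

open Filter Topology
open scoped ComplexOrder

namespace LinearMap

variable {E : Type*} [AddCommGroup E] [Module ℂ E] {B : E →ₗ⋆[ℂ] E →ₗ[ℂ] ℂ}

theorem IsNonneg.isSymm (hB : B.IsNonneg) : B.IsSymm := by
  have him : ∀ z, (B z z).im = 0 := fun z => (Complex.nonneg_iff.1 (hB.nonneg z)).2.symm
  refine ⟨fun x y => ?_⟩
  have h₁ := him (x + y)
  have h₂ := him (x + Complex.I • y)
  simp only [map_add, map_smulₛₗ, add_apply, smul_apply, smul_eq_mul, RingHom.id_apply,
    Complex.add_im, Complex.mul_im, Complex.add_re, Complex.mul_re, Complex.conj_re,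
    Complex.conj_im, Complex.I_re, Complex.I_im, him x, him y] at h₁ h₂
  apply Complex.ext <;> simp only [Complex.conj_re, Complex.conj_im] <;> linarith

abbrev IsNonneg.toPreInnerProductCore (hB : B.IsNonneg) : PreInnerProductSpace.Core ℂ E where
  inner x y := B x y
  conj_inner_symm x y := hB.isSymm.eq y x
  re_inner_nonneg x := (Complex.nonneg_iff.1 (hB.nonneg x)).1
  add_left x y z := by simp only [map_add, add_apply]
  smul_left x y r := by simp only [map_smulₛₗ, smul_apply, smul_eq_mul]

theorem IsNonneg.norm_apply_sq_le (hB : B.IsNonneg) (x y : E) :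
    ‖B x y‖ ^ 2 ≤ (B x x).re * (B y y).re := by
  have h : ‖B x y‖ * ‖B y x‖ ≤ (B x x).re * (B y y).re :=
    InnerProductSpace.Core.inner_mul_inner_self_le (c := hB.toPreInnerProductCore) x y
  rwa [← hB.isSymm.eq x y, Complex.norm_conj, ← sq] at h

theorem IsNonneg.apply_eq_zero_of_apply_self_eq_zero (hB : B.IsNonneg) {x : E} (hx : B x x = 0)
    (y : E) : B x y = 0 := by
  have h := hB.norm_apply_sq_le x y
  rw [hx, Complex.zero_re, zero_mul] at h
  exact norm_eq_zero.1 (pow_eq_zero_iff two_ne_zero |>.1 (le_antisymm h (sq_nonneg _)))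

end LinearMap

theorem IsCompact.exists_pos_forall_of_eventually {X : Type*} [TopologicalSpace X] {s : Set X}
    (hs : IsCompact s) {P : X → ℝ → Prop} (hmono : ∀ x ∈ s, ∀ ⦃c c'⦄, c' ≤ c → P x c → P x c')
    (hloc : ∀ x ∈ s, ∃ c > 0, ∀ᶠ y in 𝓝[s] x, P y c) : ∃ c > 0, ∀ x ∈ s, P x c := by
  suffices h : ∃ c > 0, ∀ x ∈ s, x ∈ s → P x c from
    h.imp fun c ⟨hc, h⟩ => ⟨hc, fun x hx => h x hx hx⟩
  refine hs.induction_on (p := fun t => ∃ c > 0, ∀ x ∈ t, x ∈ s → P x c) ⟨1, one_pos, by simp⟩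
    ?_ ?_ ?_
  · rintro t t' hsub ⟨c, hc, h⟩
    exact ⟨c, hc, fun x hx => h x (hsub hx)⟩
  · rintro t t' ⟨c, hc, h⟩ ⟨c', hc', h'⟩
    refine ⟨min c c', lt_min hc hc', fun x hx hxs => ?_⟩
    rcases hx with hx | hx
    · exact hmono x hxs (min_le_left _ _) (h x hx hxs)
    · exact hmono x hxs (min_le_right _ _) (h' x hx hxs)
  · intro x hx
    obtain ⟨c, hc, h⟩ := hloc x hx
    exact ⟨_, h, c, hc, fun y hy _ => hy⟩

theorem eventually_mul_norm_sub_le {E : Type*} [SeminormedAddCommGroup E] (x₀ : E) (c : ℝ)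
    {ε : ℝ} (hε : 0 < ε) : ∀ᶠ x in 𝓝 x₀, c * ‖x - x₀‖ ≤ ε :=
  ((tendsto_norm_sub_self x₀).const_mul c).eventually_le_const (by rwa [mul_zero])

namespace FormFamily

variable {n : ℕ} {H : Type*} [NormedAddCommGroup H] [InnerProductSpace ℂ H] [CompleteSpace H]
  (S : FormFamily n H) {θ : EuclideanSpace ℝ (Fin n)}

/- Mathlib's sesquilinear forms are conjugate-linear in the first argument, so `aForm hθ x y`
is `a θ y x`. -/
def aForm (hθ : θ ∈ S.Θ) : H →ₗ⋆[ℂ] H →ₗ[ℂ] ℂ :=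
  LinearMap.mk₂'ₛₗ (starRingEnd ℂ) (RingHom.id ℂ) (fun x y => S.a θ y x)
    (fun _ _ y => S.a_addR θ hθ y _ _) (fun c x y => S.a_smulR θ hθ c y x)
    (fun _ _ _ => S.a_addL θ hθ _ _ _) (fun c x y => S.a_smulL θ hθ c y x)

def bForm (hθ : θ ∈ S.Θ) : H →ₗ⋆[ℂ] H →ₗ[ℂ] ℂ :=
  LinearMap.mk₂'ₛₗ (starRingEnd ℂ) (RingHom.id ℂ) (fun x y => S.b θ y x)
    (fun _ _ y => S.b_addR θ hθ y _ _) (fun c x y => S.b_smulR θ hθ c y x)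
    (fun _ _ _ => S.b_addL θ hθ _ _ _) (fun c x y => S.b_smulL θ hθ c y x)

@[simp]
theorem aForm_apply (hθ : θ ∈ S.Θ) (x y : H) : S.aForm hθ x y = S.a θ y x := rfl

theorem aForm_isNonneg (hθ : θ ∈ S.Θ) : (S.aForm hθ).IsNonneg :=
  ⟨fun x => Complex.nonneg_iff.2 ⟨S.a_nonneg θ hθ x, (S.a_im θ hθ x).symm⟩⟩

theorem bForm_isNonneg (hθ : θ ∈ S.Θ) : (S.bForm hθ).IsNonneg :=
  ⟨fun x => Complex.nonneg_iff.2 ⟨S.b_nonneg θ hθ x, (S.b_im θ hθ x).symm⟩⟩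

theorem a_eq_zero_of_mem_V_right (hθ : θ ∈ S.Θ) {v : H} (hv : v ∈ S.V θ) (w : H) :
    S.a θ w v = 0 :=
  (S.aForm_isNonneg hθ).apply_eq_zero_of_apply_self_eq_zero hv w

theorem a_eq_zero_of_mem_V_left (hθ : θ ∈ S.Θ) {v : H} (hv : v ∈ S.V θ) (w : H) :
    S.a θ v w = 0 :=
  (S.aForm_isNonneg hθ).isSymm.eq_iff.1 (S.a_eq_zero_of_mem_V_right hθ hv w)

theorem a_sub_left (hθ : θ ∈ S.Θ) (u v w : H) : S.a θ (u - v) w = S.a θ u w - S.a θ v w :=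
  map_sub (S.aForm hθ w) u v

theorem a_sub_right (hθ : θ ∈ S.Θ) (u v w : H) : S.a θ u (v - w) = S.a θ u v - S.a θ u w := by
  rw [← S.aForm_apply hθ, map_sub, LinearMap.sub_apply, aForm_apply, aForm_apply]

theorem a_sub_self_of_mem_V (hθ : θ ∈ S.Θ) {v : H} (hv : v ∈ S.V θ) (w : H) :
    S.a θ (w - v) (w - v) = S.a θ w w := by
  rw [S.a_sub_left hθ, S.a_eq_zero_of_mem_V_left hθ hv, S.a_sub_right hθ,
    S.a_eq_zero_of_mem_V_right hθ hv, sub_zero, sub_zero]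

theorem zero_mem_V (hθ : θ ∈ S.Θ) : (0 : H) ∈ S.V θ :=
  map_zero (S.aForm hθ 0)

def ipForm (hθ : θ ∈ S.Θ) : H →ₗ⋆[ℂ] H →ₗ[ℂ] ℂ := S.aForm hθ + S.bForm hθ

theorem ipForm_isNonneg (hθ : θ ∈ S.Θ) : (S.ipForm hθ).IsNonneg :=
  (S.aForm_isNonneg hθ).add (S.bForm_isNonneg hθ)

theorem nsq_nonneg (hθ : θ ∈ S.Θ) (u : H) : 0 ≤ S.nsq θ u :=
  (Complex.nonneg_iff.1 ((S.ipForm_isNonneg hθ).nonneg u)).1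

theorem nrm_sq (hθ : θ ∈ S.Θ) (u : H) : S.nrm θ u ^ 2 = S.nsq θ u :=
  Real.sq_sqrt (S.nsq_nonneg hθ u)

theorem nrm_nonneg (u : H) : 0 ≤ S.nrm θ u := Real.sqrt_nonneg _

theorem re_a_le_nsq (hθ : θ ∈ S.Θ) (u : H) : (S.a θ u u).re ≤ S.nsq θ u := by
  simpa [nsq, ip] using S.b_nonneg θ hθ u

theorem norm_a_le (hθ : θ ∈ S.Θ) (u w : H) : ‖S.a θ u w‖ ≤ S.nrm θ u * S.nrm θ w := by
  have h := (S.aForm_isNonneg hθ).norm_apply_sq_le w u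
  simp only [aForm_apply] at h
  refine (pow_le_pow_iff_left₀ (norm_nonneg _)
    (mul_nonneg (S.nrm_nonneg u) (S.nrm_nonneg w)) two_ne_zero).1 ?_
  rw [mul_pow, S.nrm_sq hθ, S.nrm_sq hθ, mul_comm]
  exact h.trans (mul_le_mul (S.re_a_le_nsq hθ w) (S.re_a_le_nsq hθ u) (S.a_nonneg θ hθ u)
    (S.nsq_nonneg hθ w))

theorem exists_nrm_equiv (hθ : θ ∈ S.Θ) :
    ∃ c C : ℝ, 0 < c ∧ ∀ u : H, c * ‖u‖ ≤ S.nrm θ u ∧ S.nrm θ u ≤ C * ‖u‖ := by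
  obtain ⟨c₁, c₂, hc₁, hc⟩ := S.equivNorm θ hθ
  refine ⟨√c₁, √c₂, Real.sqrt_pos.2 hc₁, fun u => ⟨?_, ?_⟩⟩
  · rw [← Real.sqrt_sq (norm_nonneg u), ← Real.sqrt_mul hc₁.le]
    exact Real.sqrt_le_sqrt (hc u).1
  · rw [← Real.sqrt_sq (norm_nonneg u), ← Real.sqrt_mul' _ (sq_nonneg _)]
    exact Real.sqrt_le_sqrt (hc u).2

theorem eq_zero_of_ip_self_eq_zero (hθ : θ ∈ S.Θ) {u : H} (hu : S.ip θ u u = 0) : u = 0 := by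
  obtain ⟨c, _, hc, hnrm⟩ := S.exists_nrm_equiv hθ
  have h : c * ‖u‖ ≤ 0 := by simpa [nrm, nsq, hu] using (hnrm u).1
  exact norm_le_zero_iff.1 (nonpos_of_mul_nonpos_right h hc)

/-- `H` with the inner product `(·, ·)_θ`. -/
def Space (_θ : S.Θ) : Type _ := H

variable (θ' : S.Θ)

instance : AddCommGroup (S.Space θ') := inferInstanceAs (AddCommGroup H)

instance : Module ℂ (S.Space θ') := inferInstanceAs (Module ℂ H)

def toSpace : H ≃ₗ[ℂ] S.Space θ' := LinearEquiv.refl ℂ H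

abbrev spaceCore : InnerProductSpace.Core ℂ (S.Space θ') where
  toCore := (S.ipForm_isNonneg θ'.2).toPreInnerProductCore
  definite _ hx := S.eq_zero_of_ip_self_eq_zero θ'.2 hx

instance : NormedAddCommGroup (S.Space θ') := (S.spaceCore θ').toNormedAddCommGroup

instance : InnerProductSpace ℂ (S.Space θ') := InnerProductSpace.ofCore (S.spaceCore θ').toCore

instance : CompleteSpace (S.Space θ') := by
  obtain ⟨c, C, hc, hnrm⟩ := S.exists_nrm_equiv θ'.2
  let e := (S.toSpace θ').toContinuousLinearEquivOfBounds C c⁻¹ (fun u => (hnrm u).2)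
    (fun _ => by rw [le_inv_mul_iff₀ hc]; exact (hnrm _).1)
  exact (completeSpace_congr (e := e.toEquiv) e.isUniformEmbedding).1 inferInstance

def nullSpace : Submodule ℂ (S.Space θ') :=
  ⨅ w : H, LinearMap.ker ((S.aForm θ'.2 w).comp (S.toSpace θ').symm.toLinearMap)

theorem toSpace_mem_nullSpace {v : H} : S.toSpace θ' v ∈ S.nullSpace θ' ↔ v ∈ S.V θ' := by
  simp only [nullSpace, Submodule.mem_iInf, LinearMap.mem_ker]
  exact ⟨fun h => h v, fun h w => S.a_eq_zero_of_mem_V_left θ'.2 h w⟩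

theorem isClosed_nullSpace : IsClosed (S.nullSpace θ' : Set (S.Space θ')) := by
  rw [nullSpace, Submodule.coe_iInf]
  refine isClosed_iInter fun w => ?_
  have hcont : Continuous ((S.aForm θ'.2 w).comp (S.toSpace θ').symm.toLinearMap) :=
    AddMonoidHomClass.continuous_of_bound _ (S.nrm θ' w) fun x => by
      rw [mul_comm]; exact S.norm_a_le θ'.2 _ w
  exact isClosed_singleton.preimage hcont

instance : (S.nullSpace θ').HasOrthogonalProjection :=
  haveI := (S.isClosed_nullSpace θ').completeSpace_coe
  inferInstance

theorem toSpace_mem_orthogonal_nullSpace {w : H} :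
    S.toSpace θ' w ∈ (S.nullSpace θ')ᗮ ↔ w ∈ S.W θ' := by
  rw [Submodule.mem_orthogonal]
  exact ⟨fun h v hv => h _ ((S.toSpace_mem_nullSpace θ').2 hv),
    fun h u hu => h _ ((S.toSpace_mem_nullSpace θ').1 hu)⟩

variable {S}

theorem nrm_add_le (hθ : θ ∈ S.Θ) (u w : H) : S.nrm θ (u + w) ≤ S.nrm θ u + S.nrm θ w :=
  norm_add_le (S.toSpace ⟨θ, hθ⟩ u) (S.toSpace ⟨θ, hθ⟩ w)

theorem nrm_le_nrm_sub_of_mem_W (hθ : θ ∈ S.Θ) {w v : H} (hw : w ∈ S.W θ) (hv : v ∈ S.V θ) :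
    S.nrm θ w ≤ S.nrm θ (w - v) := by
  have h := norm_sub_sq (𝕜 := ℂ) (S.toSpace ⟨θ, hθ⟩ w) (S.toSpace ⟨θ, hθ⟩ v)
  rw [Submodule.inner_left_of_mem_orthogonal ((S.toSpace_mem_nullSpace _).2 hv)
    ((S.toSpace_mem_orthogonal_nullSpace _).2 hw)] at h
  refine (pow_le_pow_iff_left₀ (S.nrm_nonneg w) (S.nrm_nonneg _) two_ne_zero).1 ?_
  change ‖S.toSpace ⟨θ, hθ⟩ w‖ ^ 2 ≤ ‖S.toSpace ⟨θ, hθ⟩ w - S.toSpace ⟨θ, hθ⟩ v‖ ^ 2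
  rw [h]
  simp

theorem exists_mem_V_sub_mem_W (hθ : θ ∈ S.Θ) (u : H) :
    ∃ v ∈ S.V θ, u - v ∈ S.W θ ∧ S.nrm θ v ≤ S.nrm θ u := by
  set K := S.nullSpace ⟨θ, hθ⟩
  set x := S.toSpace ⟨θ, hθ⟩ u
  refine ⟨(S.toSpace ⟨θ, hθ⟩).symm (K.starProjection x), ?_, ?_, K.norm_starProjection_apply_le x⟩
  · exact (S.toSpace_mem_nullSpace _).1 (K.starProjection_apply_mem x)
  · exact (S.toSpace_mem_orthogonal_nullSpace _).1 (K.sub_starProjection_mem_orthogonal x)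

theorem sInf_nrm_sub_le {u v : H} (hv : v ∈ S.V θ) :
    sInf ((fun v' => S.nrm θ (u - v')) '' S.V θ) ≤ S.nrm θ (u - v) :=
  csInf_le ⟨0, by rintro _ ⟨v', -, rfl⟩; exact S.nrm_nonneg _⟩ ⟨v, hv, rfl⟩

variable (S) in
def NormsComparable (K : ℝ) : Prop :=
  ∀ θ₁ ∈ S.Θ, ∀ θ₂ ∈ S.Θ, ∀ u : H, S.nrm θ₁ u ≤ K * S.nrm θ₂ u

variable (S) in
def FormLipschitzWith (La : ℝ) : Prop :=
  ∀ θ₁ ∈ S.Θ, ∀ θ₂ ∈ S.Θ, ∀ u w : H,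
    ‖S.a θ₁ u w - S.a θ₂ u w‖ ≤ La * ‖θ₁ - θ₂‖ * S.nrm θ₁ u * S.nrm θ₁ w

variable (S) in
def KernelLipschitzWith (LV : ℝ) : Prop :=
  ∀ θ₁ ∈ S.Θ, ∀ θ₂ ∈ S.Θ, ∀ v₁ ∈ S.V θ₁,
    sInf ((fun v₂ => S.nrm θ₂ (v₁ - v₂)) '' S.V θ₂) ≤ LV * ‖θ₁ - θ₂‖ * S.nrm θ₁ v₁

variable (S) in
def GapAt (θ : EuclideanSpace ℝ (Fin n)) (ν : ℝ) : Prop :=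
  ∀ w ∈ S.W θ, ν * S.nsq θ w ≤ (S.a θ w w).re

theorem GapAt.mono (hθ : θ ∈ S.Θ) {ν ν' : ℝ} (h : S.GapAt θ ν) (hν : ν' ≤ ν) : S.GapAt θ ν' :=
  fun w hw => (mul_le_mul_of_nonneg_right hν (S.nsq_nonneg hθ w)).trans (h w hw)

section UniformGap

variable {θ₁ θ₂ : EuclideanSpace ℝ (Fin n)} {v₁ v₂ : H}

theorem a_sub_self_eq (hθ₁ : θ₁ ∈ S.Θ) (hθ₂ : θ₂ ∈ S.Θ) (hv₁ : v₁ ∈ S.V θ₁) (hv₂ : v₂ ∈ S.V θ₂) :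
    S.a θ₂ (v₁ - v₂) (v₁ - v₂) = S.a θ₂ v₁ (v₁ - v₂) - S.a θ₁ v₁ (v₁ - v₂) := by
  rw [S.a_sub_left hθ₂, S.a_eq_zero_of_mem_V_left hθ₂ hv₂, S.a_eq_zero_of_mem_V_left hθ₁ hv₁]

theorem mul_nrm_sub_le_of_gapAt {La ν : ℝ} (hLa0 : 0 ≤ La) (hLa : S.FormLipschitzWith La)
    (hθ₁ : θ₁ ∈ S.Θ) (hθ₂ : θ₂ ∈ S.Θ) (hgap : S.GapAt θ₂ ν) (hv₁ : v₁ ∈ S.V θ₁)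
    (hv₂ : v₂ ∈ S.V θ₂) (hw : v₁ - v₂ ∈ S.W θ₂) :
    ν * S.nrm θ₂ (v₁ - v₂) ≤ La * ‖θ₁ - θ₂‖ * S.nrm θ₂ v₁ := by
  set w := v₁ - v₂
  have hC : 0 ≤ La * ‖θ₁ - θ₂‖ * S.nrm θ₂ v₁ := by
    have := S.nrm_nonneg (θ := θ₂) v₁
    positivity
  have key : ν * S.nrm θ₂ w ^ 2 ≤ La * ‖θ₁ - θ₂‖ * S.nrm θ₂ v₁ * S.nrm θ₂ w :=
    calc ν * S.nrm θ₂ w ^ 2 ≤ (S.a θ₂ w w).re := by rw [S.nrm_sq hθ₂]; exact hgap w hw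
      _ ≤ ‖S.a θ₂ v₁ w - S.a θ₁ v₁ w‖ := by
        rw [S.a_sub_self_eq hθ₁ hθ₂ hv₁ hv₂]; exact Complex.re_le_norm _
      _ ≤ La * ‖θ₁ - θ₂‖ * S.nrm θ₂ v₁ * S.nrm θ₂ w := by
        simpa only [norm_sub_rev θ₂ θ₁] using hLa θ₂ hθ₂ θ₁ hθ₁ v₁ w
  rcases (S.nrm_nonneg (θ := θ₂) w).eq_or_lt with h0 | hpos
  · rw [← h0, mul_zero]; exact hC
  · exact le_of_mul_le_mul_right (by linarith) hpos

theorem kernelLipschitzWith_of_gapAt {K La ν : ℝ} (hK : S.NormsComparable K)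
    (hLa0 : 0 ≤ La) (hLa : S.FormLipschitzWith La) (hν : 0 < ν) (hgap : ∀ θ ∈ S.Θ, S.GapAt θ ν) :
    S.KernelLipschitzWith (K * La / ν) := by
  intro θ₁ hθ₁ θ₂ hθ₂ v₁ hv₁
  obtain ⟨v₂, hv₂, hw, -⟩ := S.exists_mem_V_sub_mem_W hθ₂ v₁
  refine (S.sInf_nrm_sub_le hv₂).trans ?_
  rw [div_mul_eq_mul_div, div_mul_eq_mul_div, le_div_iff₀ hν, mul_comm]
  calc ν * S.nrm θ₂ (v₁ - v₂) ≤ La * ‖θ₁ - θ₂‖ * S.nrm θ₂ v₁ :=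
        S.mul_nrm_sub_le_of_gapAt hLa0 hLa hθ₁ hθ₂ (hgap θ₂ hθ₂) hv₁ hv₂ hw
    _ ≤ La * ‖θ₁ - θ₂‖ * (K * S.nrm θ₁ v₁) := by
        gcongr
        exact hK θ₂ hθ₂ θ₁ hθ₁ v₁
    _ = K * La * ‖θ₁ - θ₂‖ * S.nrm θ₁ v₁ := by ring

end UniformGap

section LocalGap

variable {θ₀ : EuclideanSpace ℝ (Fin n)} {K : ℝ}

theorem nrm_le_of_kernelLipschitzWith {LV : ℝ} (hLV : 0 ≤ LV) (hK : S.NormsComparable K)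
    (hV : S.KernelLipschitzWith LV) (hθ₀ : θ₀ ∈ S.Θ) (hθ : θ ∈ S.Θ) {w v : H} (hw : w ∈ S.W θ)
    (hv : v ∈ S.V θ₀) (hvw : S.nrm θ₀ v ≤ S.nrm θ₀ w) :
    S.nrm θ w ≤ K * S.nrm θ₀ (w - v) + LV * K * ‖θ - θ₀‖ * S.nrm θ w := by
  have hdist : S.nrm θ w - S.nrm θ (w - v) ≤ sInf ((fun v' => S.nrm θ (v - v')) '' S.V θ) := by
    refine le_csInf ⟨_, 0, S.zero_mem_V hθ, rfl⟩ ?_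
    rintro _ ⟨v', hv', rfl⟩
    have h₁ := S.nrm_le_nrm_sub_of_mem_W hθ hw hv'
    have h₂ := S.nrm_add_le hθ (w - v) (v - v')
    rw [sub_add_sub_cancel] at h₂
    linarith
  have hLip : sInf ((fun v' => S.nrm θ (v - v')) '' S.V θ) ≤ LV * K * ‖θ - θ₀‖ * S.nrm θ w :=
    calc _ ≤ LV * ‖θ₀ - θ‖ * S.nrm θ₀ v := hV θ₀ hθ₀ θ hθ v hv
      _ ≤ LV * ‖θ - θ₀‖ * (K * S.nrm θ w) := by
        rw [norm_sub_rev]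
        gcongr
        exact hvw.trans (hK θ₀ hθ₀ θ hθ w)
      _ = LV * K * ‖θ - θ₀‖ * S.nrm θ w := by ring
  linarith [hK θ hθ θ₀ hθ₀ (w - v)]

theorem re_a_le_of_formLipschitzWith {La : ℝ} (hLa0 : 0 ≤ La) (hK : S.NormsComparable K)
    (hLa : S.FormLipschitzWith La) (hθ₀ : θ₀ ∈ S.Θ) (hθ : θ ∈ S.Θ) (w : H) :
    (S.a θ₀ w w).re ≤ (S.a θ w w).re + La * K ^ 2 * ‖θ - θ₀‖ * S.nrm θ w ^ 2 := by
  have hw := hK θ₀ hθ₀ θ hθ w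
  have hdiff : (S.a θ₀ w w).re - (S.a θ w w).re ≤ La * ‖θ₀ - θ‖ * S.nrm θ₀ w * S.nrm θ₀ w :=
    (Complex.sub_re _ _ ▸ Complex.re_le_norm _).trans (hLa θ₀ hθ₀ θ hθ w w)
  have hsq : S.nrm θ₀ w * S.nrm θ₀ w ≤ K ^ 2 * S.nrm θ w ^ 2 := by
    rw [← mul_pow, ← sq]
    exact pow_le_pow_left₀ (S.nrm_nonneg w) hw 2
  rw [norm_sub_rev, mul_assoc] at hdiff
  nlinarith [mul_le_mul_of_nonneg_left hsq (mul_nonneg hLa0 (norm_nonneg (θ - θ₀)))]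

theorem gapAt_of_near {La LV ν₀ : ℝ} (hK0 : 0 < K) (hK : S.NormsComparable K) (hLa0 : 0 ≤ La)
    (hLa : S.FormLipschitzWith La) (hLV : 0 ≤ LV) (hV : S.KernelLipschitzWith LV)
    (hθ₀ : θ₀ ∈ S.Θ) (hθ : θ ∈ S.Θ) (hgap : S.GapAt θ₀ ν₀)
    (hnear₁ : 2 * (LV * K) * ‖θ - θ₀‖ ≤ 1) (hnear₂ : 8 * (La * K ^ 4) * ‖θ - θ₀‖ ≤ ν₀) :
    S.GapAt θ (ν₀ / (8 * K ^ 2)) := by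
  intro w hw
  obtain ⟨v, hv, hu, hvw⟩ := S.exists_mem_V_sub_mem_W hθ₀ w
  have h₁ := S.nrm_le_of_kernelLipschitzWith hLV hK hV hθ₀ hθ hw hv hvw
  have h₂ : ν₀ * S.nrm θ₀ (w - v) ^ 2 ≤ (S.a θ₀ w w).re := by
    rw [S.nrm_sq hθ₀, ← S.a_sub_self_of_mem_V hθ₀ hv]
    exact hgap _ hu
  have h₃ := S.re_a_le_of_formLipschitzWith hLa0 hK hLa hθ₀ hθ w
  set X := S.nrm θ w
  set Y := S.nrm θ₀ (w - v)
  have hX : X ≤ 2 * K * Y := by nlinarith [S.nrm_nonneg (θ := θ) w]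
  have hXY : X ^ 2 ≤ 4 * K ^ 2 * Y ^ 2 := by
    nlinarith [pow_le_pow_left₀ (S.nrm_nonneg w) hX 2]
  have hν₀ : 0 ≤ ν₀ := le_trans (by positivity) hnear₂
  have hgapθ : ν₀ * X ^ 2 ≤ 4 * K ^ 2 * (S.a θ w w).re + 8 * (La * K ^ 4) * ‖θ - θ₀‖ / 2 * X ^ 2 :=
    calc ν₀ * X ^ 2 ≤ ν₀ * (4 * K ^ 2 * Y ^ 2) := mul_le_mul_of_nonneg_left hXY hν₀
      _ = 4 * K ^ 2 * (ν₀ * Y ^ 2) := by ring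
      _ ≤ 4 * K ^ 2 * ((S.a θ w w).re + La * K ^ 2 * ‖θ - θ₀‖ * X ^ 2) := by
        gcongr
        exact h₂.trans h₃
      _ = _ := by ring
  rw [← S.nrm_sq hθ, div_mul_eq_mul_div, div_le_iff₀ (by positivity)]
  nlinarith [mul_le_mul_of_nonneg_right hnear₂ (sq_nonneg X)]

end LocalGap

theorem exists_gapAt_of_kernelLipschitzWith {K La LV : ℝ} (hK0 : 0 < K)
    (hK : S.NormsComparable K) (hLa0 : 0 ≤ La) (hLa : S.FormLipschitzWith La) (hLV : 0 ≤ LV)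
    (hV : S.KernelLipschitzWith LV) (hgap : ∀ θ ∈ S.Θ, ∃ ν > 0, S.GapAt θ ν) :
    ∃ ν > 0, ∀ θ ∈ S.Θ, S.GapAt θ ν := by
  refine S.compactΘ.exists_pos_forall_of_eventually (fun θ hθ _ _ hν h => h.mono hθ hν)
    fun θ₀ hθ₀ => ?_
  obtain ⟨ν₀, hν₀, hgap₀⟩ := hgap θ₀ hθ₀
  refine ⟨ν₀ / (8 * K ^ 2), by positivity, ?_⟩
  filter_upwards [self_mem_nhdsWithin,
    nhdsWithin_le_nhds (eventually_mul_norm_sub_le θ₀ (2 * (LV * K)) one_pos),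
    nhdsWithin_le_nhds (eventually_mul_norm_sub_le θ₀ (8 * (La * K ^ 4)) hν₀)] with θ hθ h₁ h₂
  exact S.gapAt_of_near hK0 hK hLa0 hLa hLV hV hθ₀ hθ hgap₀ h₁ h₂

end FormFamily

theorem statement1_general
    {n : ℕ} {H : Type*} [NormedAddCommGroup H] [InnerProductSpace ℂ H]
    [CompleteSpace H] (S : FormFamily n H)
    (K : ℝ) (hK0 : 0 < K)
    (hK : ∀ θ₁ ∈ S.Θ, ∀ θ₂ ∈ S.Θ, ∀ u : H, S.nrm θ₁ u ≤ K * S.nrm θ₂ u)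
    (La : ℝ) (hLa0 : 0 < La)
    (hLa : ∀ θ₁ ∈ S.Θ, ∀ θ₂ ∈ S.Θ, ∀ u w : H,
      ‖S.a θ₁ u w - S.a θ₂ u w‖ ≤ La * ‖θ₁ - θ₂‖ * S.nrm θ₁ u * S.nrm θ₁ w)
    (hH1 : ∀ θ ∈ S.Θ, ∃ νθ : ℝ, 0 < νθ ∧ ∀ w ∈ S.W θ, νθ * S.nsq θ w ≤ (S.a θ w w).re)
 :
    (∃ ν : ℝ, 0 < ν ∧ ∀ θ ∈ S.Θ, ∀ w ∈ S.W θ, ν * S.nsq θ w ≤ (S.a θ w w).re) ↔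
      ∃ LV : ℝ, 0 < LV ∧ ∀ θ₁ ∈ S.Θ, ∀ θ₂ ∈ S.Θ, ∀ v₁ ∈ S.V θ₁,
        sInf ((fun v₂ => S.nrm θ₂ (v₁ - v₂)) '' S.V θ₂) ≤ LV * ‖θ₁ - θ₂‖ * S.nrm θ₁ v₁ := by
  constructor
  · rintro ⟨ν, hν, hgap⟩
    exact ⟨K * La / ν, by positivity, S.kernelLipschitzWith_of_gapAt hK hLa0.le hLa hν hgap⟩
  · rintro ⟨LV, hLV, hV⟩
    exact S.exists_gapAt_of_kernelLipschitzWith hK0 hK hLa0.le hLa hLV.le hV hH1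

theorem statement1
    {n : ℕ} (hn : 0 < n) {H : Type*} [NormedAddCommGroup H] [InnerProductSpace ℂ H]
    [CompleteSpace H] (S : FormFamily n H)
    (K : ℝ) (hK0 : 0 < K)
    (hK : ∀ θ₁ ∈ S.Θ, ∀ θ₂ ∈ S.Θ, ∀ u : H, S.nrm θ₁ u ≤ K * S.nrm θ₂ u)
    (La : ℝ) (hLa0 : 0 < La)
    (hLa : ∀ θ₁ ∈ S.Θ, ∀ θ₂ ∈ S.Θ, ∀ u w : H,
      ‖S.a θ₁ u w - S.a θ₂ u w‖ ≤ La * ‖θ₁ - θ₂‖ * S.nrm θ₁ u * S.nrm θ₁ w)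
    (hH1 : ∀ θ ∈ S.Θ, ∃ νθ : ℝ, 0 < νθ ∧ ∀ w ∈ S.W θ, νθ * S.nsq θ w ≤ (S.a θ w w).re)
 :
    (∃ ν : ℝ, 0 < ν ∧ ∀ θ ∈ S.Θ, ∀ w ∈ S.W θ, ν * S.nsq θ w ≤ (S.a θ w w).re) ↔
      ∃ LV : ℝ, 0 < LV ∧ ∀ θ₁ ∈ S.Θ, ∀ θ₂ ∈ S.Θ, ∀ v₁ ∈ S.V θ₁,
        sInf ((fun v₂ => S.nrm θ₂ (v₁ - v₂)) '' S.V θ₂) ≤ LV * ‖θ₁ - θ₂‖ * S.nrm θ₁ v₁ :=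
  statement1_general S K hK0 hK La hLa0 hLa hH1
end
end

section
/- For every θ ∈ Θ with |θ| ≤ ν₀/(2 L_a) and every w₀ ∈ W₀, one has a_θ[w₀] ≥ (ν₀/(2K²)) ‖w₀‖_θ². -/
noncomputable section

open scoped Classical

theorem statement2
    {n : ℕ} (hn : 0 < n) {H : Type*} [NormedAddCommGroup H] [InnerProductSpace ℂ H]
    [CompleteSpace H] (S : FormFamily n H)
    (K : ℝ) (hK0 : 0 < K)
    (hK : ∀ θ₁ ∈ S.Θ, ∀ θ₂ ∈ S.Θ, ∀ u : H, S.nrm θ₁ u ≤ K * S.nrm θ₂ u)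
    (La : ℝ) (hLa0 : 0 < La)
    (hLa : ∀ θ₁ ∈ S.Θ, ∀ θ₂ ∈ S.Θ, ∀ u w : H,
      ‖S.a θ₁ u w - S.a θ₂ u w‖ ≤ La * ‖θ₁ - θ₂‖ * S.nrm θ₁ u * S.nrm θ₁ w)
    (h0 : (0 : EuclideanSpace ℝ (Fin n)) ∈ S.Θ)
    (ν₀ : ℝ) (hν₀ : 0 < ν₀)
    (hgap0 : ∀ w ∈ S.W 0, ν₀ * S.nsq 0 w ≤ (S.a 0 w w).re)
 :
    ∀ θ ∈ S.Θ, ‖θ‖ ≤ ν₀ / (2 * La) →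
      ∀ w ∈ S.W 0, ν₀ / (2 * K ^ 2) * S.nsq θ w ≤ (S.a θ w w).re := by
  intro θ hθ hθν w hw
  have hnsq0 : 0 ≤ S.nsq 0 w := by
    simp only [FormFamily.nsq, FormFamily.ip, Complex.add_re]
    linarith [S.a_nonneg 0 h0 w, S.b_nonneg 0 h0 w]
  have hnsqθ : 0 ≤ S.nsq θ w := by
    simp only [FormFamily.nsq, FormFamily.ip, Complex.add_re]
    linarith [S.a_nonneg θ hθ w, S.b_nonneg θ hθ w]
  have hnrm0sq : S.nrm 0 w * S.nrm 0 w = S.nsq 0 w := Real.mul_self_sqrt hnsq0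
  have hnrmθsq : S.nrm θ w * S.nrm θ w = S.nsq θ w := Real.mul_self_sqrt hnsqθ
  -- Lipschitz bound with θ₁ = 0, θ₂ = θ
  have hdiff : ‖S.a 0 w w - S.a θ w w‖ ≤ La * ‖θ‖ * S.nsq 0 w := by
    have h := hLa 0 h0 θ hθ w w
    have hn : ‖(0 : EuclideanSpace ℝ (Fin n)) - θ‖ = ‖θ‖ := by
      rw [zero_sub, norm_neg]
    rw [hn] at h
    calc ‖S.a 0 w w - S.a θ w w‖ ≤ La * ‖θ‖ * S.nrm 0 w * S.nrm 0 w := h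
      _ = La * ‖θ‖ * S.nsq 0 w := by rw [mul_assoc, hnrm0sq]
  have hre : (S.a 0 w w).re - (S.a θ w w).re ≤ ‖S.a 0 w w - S.a θ w w‖ := by
    calc (S.a 0 w w).re - (S.a θ w w).re = (S.a 0 w w - S.a θ w w).re := by
          rw [Complex.sub_re]
      _ ≤ |(S.a 0 w w - S.a θ w w).re| := le_abs_self _
      _ ≤ ‖S.a 0 w w - S.a θ w w‖ := Complex.abs_re_le_norm _
  have hLaθ : La * ‖θ‖ ≤ ν₀ / 2 := by
    have := mul_le_mul_of_nonneg_left hθν hLa0.le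
    calc La * ‖θ‖ ≤ La * (ν₀ / (2 * La)) := this
      _ = ν₀ / 2 := by field_simp
  -- norm comparison
  have hKsq : S.nsq θ w ≤ K ^ 2 * S.nsq 0 w := by
    have h1 : S.nrm θ w ≤ K * S.nrm 0 w := hK θ hθ 0 h0 w
    have h2 : 0 ≤ S.nrm θ w := Real.sqrt_nonneg _
    have h3 : 0 ≤ S.nrm 0 w := Real.sqrt_nonneg _
    nlinarith
  have hgap := hgap0 w hw
  -- a_θ[w].re ≥ ν₀/2 * nsq 0 w
  have key : ν₀ / 2 * S.nsq 0 w ≤ (S.a θ w w).re := by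
    nlinarith [mul_le_mul_of_nonneg_right hLaθ hnsq0]
  have hcancel : ν₀ / (2 * K ^ 2) * (K ^ 2 * S.nsq 0 w) = ν₀ / 2 * S.nsq 0 w := by
    have : (K : ℝ) ^ 2 ≠ 0 := by positivity
    field_simp
  calc ν₀ / (2 * K ^ 2) * S.nsq θ w
      ≤ ν₀ / (2 * K ^ 2) * (K ^ 2 * S.nsq 0 w) := by
        apply mul_le_mul_of_nonneg_left hKsq
        positivity
    _ = ν₀ / 2 * S.nsq 0 w := hcancel
    _ ≤ (S.a θ w w).re := key
end
end
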